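/- (a) ⋀H_ℂ = Λ^{2,0} ⊕ Λ^{1,1} ⊕ Λ^{0,2}. (b) For every h ∈ H^{2,0}: λ_h(Λ^{2,0}) = 0, λ_h(Λ^{1,1}) ⊆ Λ^{2,0}, and λ_h(Λ^{0,2}) ⊆ Λ^{1,1}. (c) For every h ∈ H^{1,1}: λ_h(Λ^{2,0}) ⊆ Λ^{2,0}, λ_h(Λ^{1,1}) ⊆ Λ^{1,1}, and λ_h(Λ^{0,2}) ⊆ Λ^{0,2}. (d) For every h ∈ H^{0,2}: λ_h(Λ^{0,2}) = 0, λ_h(Λ^{1,1}) ⊆ Λ^{0,2}, and λ_h(Λ^{2,0}) ⊆ Λ^{1,1}. Consequently the Clifford algebra of H, identified as a module with ⋀H, carries a weight 2 Hodge structure for which Clifford multiplication is a morphism of Hodge structures of bidegree (−1,−1). -/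

import Mathlib

open scoped TensorProduct

noncomputable section

variable (H : Type) [AddCommGroup H] [Module ℚ H] [FiniteDimensional ℚ H]

/-- The conjugate-linear involution of `H_ℂ = ℂ ⊗[ℚ] H` fixing `H`. -/
def sigmaM : ℂ ⊗[ℚ] H →ₗ[ℚ] ℂ ⊗[ℚ] H :=
  LinearMap.rTensor H (Complex.conjAe.toLinearMap.restrictScalars ℚ)

/-- The inclusion of `H` into `H_ℂ = ℂ ⊗[ℚ] H`. -/
def inclM : H →ₗ[ℚ] ℂ ⊗[ℚ] H := TensorProduct.mk ℚ ℂ H 1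

/-- A polarized weight 2 Hodge structure of `K3` type (`dim_ℂ H^{2,0} = 1`) on a
finite-dimensional `ℚ`-vector space `H`: a Hodge decomposition
`H_ℂ = H^{2,0} ⊕ H^{1,1} ⊕ H^{0,2}` with `σ(H^{2,0}) = H^{0,2}`, `σ(H^{1,1}) = H^{1,1}`,
and a symmetric bilinear form `B` on `H` with `ℂ`-bilinear extension `BC` whose Hermitian
pairing `h(α,β) := BC α (σ β)` makes the pieces pairwise orthogonal and is positive definite
on `H^{2,0}`, `H^{0,2}` and negative definite on `H^{1,1}`. -/
structure K3HodgeData where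
  H20 : Submodule ℂ (ℂ ⊗[ℚ] H)
  H11 : Submodule ℂ (ℂ ⊗[ℚ] H)
  H02 : Submodule ℂ (ℂ ⊗[ℚ] H)
  sup_top : H20 ⊔ H11 ⊔ H02 = ⊤
  disj1 : H20 ⊓ (H11 ⊔ H02) = ⊥
  disj2 : H11 ⊓ H02 = ⊥
  rank20 : Module.finrank ℂ H20 = 1
  sigma_20 : ∀ x ∈ H20, sigmaM H x ∈ H02
  sigma_02 : ∀ x ∈ H02, sigmaM H x ∈ H20
  sigma_11 : ∀ x ∈ H11, sigmaM H x ∈ H11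
  B : H →ₗ[ℚ] H →ₗ[ℚ] ℚ
  B_symm : ∀ a b : H, B a b = B b a
  BC : (ℂ ⊗[ℚ] H) →ₗ[ℂ] (ℂ ⊗[ℚ] H) →ₗ[ℂ] ℂ
  BC_extends : ∀ a b : H, BC (inclM H a) (inclM H b) = (B a b : ℂ)
  BC_symm : ∀ x y, BC x y = BC y x
  BC_conj : ∀ x y, BC (sigmaM H x) (sigmaM H y) = starRingEnd ℂ (BC x y)
  orth_20_11 : ∀ x ∈ H20, ∀ y ∈ H11, BC x (sigmaM H y) = 0
  orth_20_02 : ∀ x ∈ H20, ∀ y ∈ H02, BC x (sigmaM H y) = 0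
  orth_11_02 : ∀ x ∈ H11, ∀ y ∈ H02, BC x (sigmaM H y) = 0
  pos_20 : ∀ x ∈ H20, x ≠ 0 → 0 < (BC x (sigmaM H x)).re ∧ (BC x (sigmaM H x)).im = 0
  pos_02 : ∀ x ∈ H02, x ≠ 0 → 0 < (BC x (sigmaM H x)).re ∧ (BC x (sigmaM H x)).im = 0
  neg_11 : ∀ x ∈ H11, x ≠ 0 → (BC x (sigmaM H x)).re < 0 ∧ (BC x (sigmaM H x)).im = 0

variable {H}

/-- `⋀H^{1,1}`, the subalgebra of the exterior algebra `⋀H_ℂ` generated by `H^{1,1}`. -/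
def K3HodgeData.wedgeH11 (D : K3HodgeData H) : Subalgebra ℂ (ExteriorAlgebra ℂ (ℂ ⊗[ℚ] H)) :=
  Algebra.adjoin ℂ (ExteriorAlgebra.ι ℂ '' (D.H11 : Set (ℂ ⊗[ℚ] H)))

/-- `Λ^{2,0} := H^{2,0} ∧ (⋀H^{1,1})`. -/
def K3HodgeData.Lam20 (D : K3HodgeData H) : Submodule ℂ (ExteriorAlgebra ℂ (ℂ ⊗[ℚ] H)) :=
  Submodule.span ℂ {z | ∃ a ∈ D.H20, ∃ w ∈ D.wedgeH11, z = ExteriorAlgebra.ι ℂ a * w}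

/-- `Λ^{0,2} := H^{0,2} ∧ (⋀H^{1,1})`. -/
def K3HodgeData.Lam02 (D : K3HodgeData H) : Submodule ℂ (ExteriorAlgebra ℂ (ℂ ⊗[ℚ] H)) :=
  Submodule.span ℂ {z | ∃ a ∈ D.H02, ∃ w ∈ D.wedgeH11, z = ExteriorAlgebra.ι ℂ a * w}

/-- `Λ^{1,1} := (⋀H^{1,1}) + H^{2,0} ∧ (H^{0,2} ∧ (⋀H^{1,1}))`. -/
def K3HodgeData.Lam11 (D : K3HodgeData H) : Submodule ℂ (ExteriorAlgebra ℂ (ℂ ⊗[ℚ] H)) :=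
  Subalgebra.toSubmodule D.wedgeH11 ⊔
    Submodule.span ℂ {z | ∃ a ∈ D.H20, ∃ b ∈ D.H02, ∃ w ∈ D.wedgeH11,
      z = ExteriorAlgebra.ι ℂ a * (ExteriorAlgebra.ι ℂ b * w)}

/-- `λ_h(x) := h ∧ x − ι_{⟨h,·⟩}(x)`, left Clifford multiplication by `h` under the standard
module identification of the Clifford algebra of `(H_ℂ, −⟨,⟩)` with `⋀H_ℂ`. -/
def K3HodgeData.lam (D : K3HodgeData H) (h : ℂ ⊗[ℚ] H)
    (x : ExteriorAlgebra ℂ (ℂ ⊗[ℚ] H)) : ExteriorAlgebra ℂ (ℂ ⊗[ℚ] H) :=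
  ExteriorAlgebra.ι ℂ h * x - CliffordAlgebra.contractLeft (D.BC h) x

/-! Let `e` span `H^{2,0}`; then `σ e` spans `H^{0,2}`, and wedging two vectors of `H^{2,0}` (or
of `H^{0,2}`) gives `0`. The form `⟨h, ·⟩` vanishes on `H^{2,0} ⊕ H^{1,1}` for `h ∈ H^{2,0}`, on
`H^{2,0} ⊕ H^{0,2}` for `h ∈ H^{1,1}` and on `H^{1,1} ⊕ H^{0,2}` for `h ∈ H^{0,2}`. Hence the wedge
product with `h` and the contraction with `⟨h, ·⟩` each move the pieces `Λ^{p,q}` as claimed for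
`λ_h`, and so does their difference `λ_h`. The wedge products alone show that
`Λ^{2,0} + Λ^{1,1} + Λ^{0,2}` is a left ideal containing `1`, so it is everything. For the
directness of the sum, `J = e ∧ ι_{⟨σ e, ·⟩} - σ e ∧ ι_{⟨e, ·⟩}` acts on `Λ^{2,0}`, `Λ^{1,1}`,
`Λ^{0,2}` as `c`, `0`, `-c` with `c = ⟨e, σ e⟩ ≠ 0` by positivity, so the three pieces lie in
distinct eigenspaces of `J`. -/

theorem Algebra.adjoin_toSubmodule_le_of_mul_mem {R A : Type*} [CommSemiring R] [Semiring A]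
    [Algebra R A] {s : Set A} {N : Submodule R A} (hone : 1 ∈ N)
    (hmul : ∀ a ∈ s, ∀ x ∈ N, a * x ∈ N) :
    Subalgebra.toSubmodule (Algebra.adjoin R s) ≤ N := by
  intro y hy
  have hyN : ∀ x ∈ N, y * x ∈ N := by
    induction hy using Algebra.adjoin_induction with
    | mem a ha => exact hmul a ha
    | algebraMap r => intro x hx; rw [← Algebra.smul_def]; exact N.smul_mem r hx
    | add y z _ _ hy hz => intro x hx; rw [add_mul]; exact N.add_mem (hy x hx) (hz x hx)
    | mul y z _ _ hy hz => intro x hx; rw [mul_assoc]; exact hy _ (hz x hx)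
  simpa using hyN 1 hone

theorem LinearMap.apply_smul_eq_smul_of_mem_span_singleton {R M : Type*} [CommSemiring R]
    [AddCommMonoid M] [Module R M] (φ : M →ₗ[R] R) {e a : M} (ha : a ∈ R ∙ e) :
    φ a • e = φ e • a := by
  obtain ⟨s, rfl⟩ := Submodule.mem_span_singleton.1 ha
  rw [map_smul, smul_eq_mul, mul_smul, smul_comm]

theorem Submodule.le_comap_sub {R M M₂ : Type*} [Ring R] [AddCommGroup M] [AddCommGroup M₂]
    [Module R M] [Module R M₂] {P : Submodule R M} {Q : Submodule R M₂} {S T : M →ₗ[R] M₂}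
    (hS : P ≤ Q.comap S) (hT : P ≤ Q.comap T) : P ≤ Q.comap (S - T) :=
  fun _ hx => Q.sub_mem (hS hx) (hT hx)

namespace CliffordAlgebra

variable {R M : Type*} [CommRing R] [AddCommGroup M] [Module R M] {Q : QuadraticForm R M}
  (d : Module.Dual R M) {W : Submodule R M} {x : CliffordAlgebra Q}

theorem contractLeft_mem_adjoin (hx : x ∈ Algebra.adjoin R (ι Q '' W)) :
    contractLeft d x ∈ Algebra.adjoin R (ι Q '' W) := by
  set A := Algebra.adjoin R (ι Q '' W)
  have hι : ∀ w ∈ W, ι Q w ∈ A := fun w hw => Algebra.subset_adjoin ⟨w, hw, rfl⟩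
  refine (Algebra.adjoin_toSubmodule_le_of_mul_mem
    (N := Subalgebra.toSubmodule A ⊓ (Subalgebra.toSubmodule A).comap (contractLeft d))
    ⟨A.one_mem, by simp [contractLeft_one]⟩ ?_ hx).2
  rintro _ ⟨w, hw, rfl⟩ y ⟨hyA, hcy⟩
  refine ⟨A.mul_mem (hι w hw) hyA, ?_⟩
  change contractLeft d (ι Q w * y) ∈ A
  rw [contractLeft_ι_mul]
  exact A.sub_mem (A.smul_mem hyA _) (A.mul_mem (hι w hw) hcy)

theorem contractLeft_eq_zero_of_mem_adjoin (hd : ∀ w ∈ W, d w = 0)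
    (hx : x ∈ Algebra.adjoin R (ι Q '' W)) : contractLeft d x = 0 := by
  refine Algebra.adjoin_toSubmodule_le_of_mul_mem (N := LinearMap.ker (contractLeft d))
    (contractLeft_one Q d) ?_ hx
  rintro _ ⟨w, hw, rfl⟩ y hy
  rw [LinearMap.mem_ker, contractLeft_ι_mul, hd w hw, LinearMap.mem_ker.1 hy, zero_smul,
    mul_zero, sub_zero]

end CliffordAlgebra

namespace ExteriorAlgebra

variable {R M : Type*} [CommRing R] [AddCommGroup M] [Module R M]

theorem ι_mul_ι_mul_swap (x y : M) (w : ExteriorAlgebra R M) :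
    ι R x * (ι R y * w) = -(ι R y * (ι R x * w)) := by
  rw [← mul_assoc, ← mul_assoc, ← neg_mul, eq_neg_of_add_eq_zero_left (ι_add_mul_swap x y)]

theorem ι_mul_ι_eq_zero_of_mem_span_singleton {e a b : M} (ha : a ∈ R ∙ e) (hb : b ∈ R ∙ e) :
    ι R a * ι R b = 0 := by
  obtain ⟨s, rfl⟩ := Submodule.mem_span_singleton.1 ha
  obtain ⟨t, rfl⟩ := Submodule.mem_span_singleton.1 hb
  rw [map_smul, map_smul, smul_mul_smul_comm, ι_sq_zero, smul_zero]

end ExteriorAlgebra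

open ExteriorAlgebra (ι ι_mul_ι_mul_swap)
open CliffordAlgebra (contractLeft contractLeft_ι_mul)

section

variable {V : Type} [AddCommGroup V] [Module ℚ V]

theorem sigmaM_sigmaM (x : ℂ ⊗[ℚ] V) : sigmaM V (sigmaM V x) = x := by
  induction x using TensorProduct.induction_on with
  | zero => simp
  | tmul z m => simp [sigmaM]
  | add x y hx hy => simp [map_add, hx, hy]

theorem sigmaM_smul (c : ℂ) (x : ℂ ⊗[ℚ] V) :
    sigmaM V (c • x) = starRingEnd ℂ c • sigmaM V x := by
  induction x using TensorProduct.induction_on with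
  | zero => simp
  | tmul z m => simp [sigmaM, TensorProduct.smul_tmul']
  | add x y hx hy => simp [smul_add, hx, hy]

namespace K3HodgeData

variable (D : K3HodgeData V) {a b h e f : ℂ ⊗[ℚ] V} {w : ExteriorAlgebra ℂ (ℂ ⊗[ℚ] V)}

theorem BC_eq_zero_of_H20_of_H20 (ha : a ∈ D.H20) (hb : b ∈ D.H20) : D.BC a b = 0 := by
  simpa [sigmaM_sigmaM] using D.orth_20_02 a ha _ (D.sigma_20 b hb)

theorem BC_eq_zero_of_H20_of_H11 (ha : a ∈ D.H20) (hb : b ∈ D.H11) : D.BC a b = 0 := by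
  simpa [sigmaM_sigmaM] using D.orth_20_11 a ha _ (D.sigma_11 b hb)

theorem BC_eq_zero_of_H02_of_H02 (ha : a ∈ D.H02) (hb : b ∈ D.H02) : D.BC a b = 0 := by
  simpa [D.BC_eq_zero_of_H20_of_H20 (D.sigma_02 a ha) (D.sigma_02 b hb)] using
    (D.BC_conj a b).symm

theorem BC_eq_zero_of_H02_of_H11 (ha : a ∈ D.H02) (hb : b ∈ D.H11) : D.BC a b = 0 := by
  simpa [D.BC_eq_zero_of_H20_of_H11 (D.sigma_02 a ha) (D.sigma_11 b hb)] using
    (D.BC_conj a b).symm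

theorem exists_H20_eq_span_singleton : ∃ e, e ≠ 0 ∧ D.H20 = ℂ ∙ e := by
  obtain ⟨⟨e, he⟩, he0, hgen⟩ := finrank_eq_one_iff'.1 D.rank20
  refine ⟨e, fun h => he0 (Subtype.ext h), le_antisymm (fun a ha => ?_)
    ((Submodule.span_singleton_le_iff_mem _ _).2 he)⟩
  obtain ⟨c, hc⟩ := hgen ⟨a, ha⟩
  exact Submodule.mem_span_singleton.2 ⟨c, congrArg Subtype.val hc⟩

theorem H02_eq_span_sigmaM (he : D.H20 = ℂ ∙ e) : D.H02 = ℂ ∙ sigmaM V e := by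
  refine le_antisymm (fun b hb => ?_) ((Submodule.span_singleton_le_iff_mem _ _).2
    (D.sigma_20 e (he ▸ Submodule.mem_span_singleton_self e)))
  obtain ⟨s, hs⟩ := Submodule.mem_span_singleton.1 (he ▸ D.sigma_02 b hb)
  refine Submodule.mem_span_singleton.2 ⟨starRingEnd ℂ s, ?_⟩
  rw [← sigmaM_smul, hs, sigmaM_sigmaM]

theorem ι_mul_ι_mul_eq_zero_of_H20 (ha : a ∈ D.H20) (hb : b ∈ D.H20) (w) :
    ι ℂ a * (ι ℂ b * w) = 0 := by
  obtain ⟨e, -, he⟩ := D.exists_H20_eq_span_singleton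
  rw [← mul_assoc, ExteriorAlgebra.ι_mul_ι_eq_zero_of_mem_span_singleton (he ▸ ha) (he ▸ hb),
    zero_mul]

theorem ι_mul_ι_mul_eq_zero_of_H02 (ha : a ∈ D.H02) (hb : b ∈ D.H02) (w) :
    ι ℂ a * (ι ℂ b * w) = 0 := by
  obtain ⟨e, -, he⟩ := D.exists_H20_eq_span_singleton
  have hf := D.H02_eq_span_sigmaM he
  rw [← mul_assoc, ExteriorAlgebra.ι_mul_ι_eq_zero_of_mem_span_singleton (hf ▸ ha) (hf ▸ hb),
    zero_mul]

theorem ι_mem_wedgeH11 (hh : h ∈ D.H11) : ι ℂ h ∈ D.wedgeH11 :=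
  Algebra.subset_adjoin ⟨h, hh, rfl⟩

theorem ι_mul_mem_Lam20 (ha : a ∈ D.H20) (hw : w ∈ D.wedgeH11) : ι ℂ a * w ∈ D.Lam20 :=
  Submodule.subset_span ⟨a, ha, w, hw, rfl⟩

theorem ι_mul_mem_Lam02 (hb : b ∈ D.H02) (hw : w ∈ D.wedgeH11) : ι ℂ b * w ∈ D.Lam02 :=
  Submodule.subset_span ⟨b, hb, w, hw, rfl⟩

theorem mem_Lam11_of_mem_wedgeH11 (hw : w ∈ D.wedgeH11) : w ∈ D.Lam11 :=
  Submodule.mem_sup_left hw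

theorem ι_mul_ι_mul_mem_Lam11 (ha : a ∈ D.H20) (hb : b ∈ D.H02) (hw : w ∈ D.wedgeH11) :
    ι ℂ a * (ι ℂ b * w) ∈ D.Lam11 :=
  Submodule.mem_sup_right (Submodule.subset_span ⟨a, ha, b, hb, w, hw, rfl⟩)

variable {N : Submodule ℂ (ExteriorAlgebra ℂ (ℂ ⊗[ℚ] V))}

theorem Lam20_le_iff : D.Lam20 ≤ N ↔ ∀ a ∈ D.H20, ∀ w ∈ D.wedgeH11, ι ℂ a * w ∈ N := by
  refine Submodule.span_le.trans ⟨fun hN a ha w hw => hN ⟨a, ha, w, hw, rfl⟩, ?_⟩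
  rintro hN _ ⟨a, ha, w, hw, rfl⟩
  exact hN a ha w hw

theorem Lam02_le_iff : D.Lam02 ≤ N ↔ ∀ b ∈ D.H02, ∀ w ∈ D.wedgeH11, ι ℂ b * w ∈ N := by
  refine Submodule.span_le.trans ⟨fun hN b hb w hw => hN ⟨b, hb, w, hw, rfl⟩, ?_⟩
  rintro hN _ ⟨b, hb, w, hw, rfl⟩
  exact hN b hb w hw

theorem Lam11_le_iff : D.Lam11 ≤ N ↔ (∀ w ∈ D.wedgeH11, w ∈ N) ∧
    ∀ a ∈ D.H20, ∀ b ∈ D.H02, ∀ w ∈ D.wedgeH11, ι ℂ a * (ι ℂ b * w) ∈ N := by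
  refine sup_le_iff.trans (and_congr Iff.rfl (Submodule.span_le.trans
    ⟨fun hN a ha b hb w hw => hN ⟨a, ha, b, hb, w, hw, rfl⟩, ?_⟩))
  rintro hN _ ⟨a, ha, b, hb, w, hw, rfl⟩
  exact hN a ha b hb w hw

variable (T : Module.End ℂ (ExteriorAlgebra ℂ (ℂ ⊗[ℚ] V)))

def RaisesType : Prop :=
  D.Lam20 ≤ LinearMap.ker T ∧ D.Lam11 ≤ D.Lam20.comap T ∧ D.Lam02 ≤ D.Lam11.comap T

def PreservesType : Prop :=
  D.Lam20 ≤ D.Lam20.comap T ∧ D.Lam11 ≤ D.Lam11.comap T ∧ D.Lam02 ≤ D.Lam02.comap T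

def LowersType : Prop :=
  D.Lam02 ≤ LinearMap.ker T ∧ D.Lam11 ≤ D.Lam02.comap T ∧ D.Lam20 ≤ D.Lam11.comap T

variable {D T}
variable {S : Module.End ℂ (ExteriorAlgebra ℂ (ℂ ⊗[ℚ] V))}

theorem RaisesType.sub (hS : D.RaisesType S) (hT : D.RaisesType T) : D.RaisesType (S - T) :=
  ⟨Submodule.le_comap_sub hS.1 hT.1, Submodule.le_comap_sub hS.2.1 hT.2.1,
    Submodule.le_comap_sub hS.2.2 hT.2.2⟩

theorem PreservesType.sub (hS : D.PreservesType S) (hT : D.PreservesType T) :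
    D.PreservesType (S - T) :=
  ⟨Submodule.le_comap_sub hS.1 hT.1, Submodule.le_comap_sub hS.2.1 hT.2.1,
    Submodule.le_comap_sub hS.2.2 hT.2.2⟩

theorem LowersType.sub (hS : D.LowersType S) (hT : D.LowersType T) : D.LowersType (S - T) :=
  ⟨Submodule.le_comap_sub hS.1 hT.1, Submodule.le_comap_sub hS.2.1 hT.2.1,
    Submodule.le_comap_sub hS.2.2 hT.2.2⟩

theorem RaisesType.le_comap_sup (hT : D.RaisesType T) :
    D.Lam20 ⊔ D.Lam11 ⊔ D.Lam02 ≤ (D.Lam20 ⊔ D.Lam11 ⊔ D.Lam02).comap T :=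
  sup_le (sup_le (hT.1.trans (LinearMap.ker_le_comap T))
    (hT.2.1.trans (Submodule.comap_mono (le_sup_left.trans le_sup_left))))
    (hT.2.2.trans (Submodule.comap_mono (le_sup_right.trans le_sup_left)))

theorem PreservesType.le_comap_sup (hT : D.PreservesType T) :
    D.Lam20 ⊔ D.Lam11 ⊔ D.Lam02 ≤ (D.Lam20 ⊔ D.Lam11 ⊔ D.Lam02).comap T :=
  sup_le (sup_le (hT.1.trans (Submodule.comap_mono (le_sup_left.trans le_sup_left)))
    (hT.2.1.trans (Submodule.comap_mono (le_sup_right.trans le_sup_left))))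
    (hT.2.2.trans (Submodule.comap_mono le_sup_right))

theorem LowersType.le_comap_sup (hT : D.LowersType T) :
    D.Lam20 ⊔ D.Lam11 ⊔ D.Lam02 ≤ (D.Lam20 ⊔ D.Lam11 ⊔ D.Lam02).comap T :=
  sup_le (sup_le (hT.2.2.trans (Submodule.comap_mono (le_sup_right.trans le_sup_left)))
    (hT.2.1.trans (Submodule.comap_mono le_sup_right)))
    (hT.1.trans (LinearMap.ker_le_comap T))

variable (D)

theorem raisesType_mulLeft (hh : h ∈ D.H20) : D.RaisesType (LinearMap.mulLeft ℂ (ι ℂ h)) := by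
  refine ⟨D.Lam20_le_iff.2 fun a ha w _ => D.ι_mul_ι_mul_eq_zero_of_H20 hh ha w,
    D.Lam11_le_iff.2 ⟨fun w hw => D.ι_mul_mem_Lam20 hh hw, fun a ha b _ w _ => ?_⟩,
    D.Lam02_le_iff.2 fun b hb w hw => D.ι_mul_ι_mul_mem_Lam11 hh hb hw⟩
  rw [Submodule.mem_comap, LinearMap.mulLeft_apply, D.ι_mul_ι_mul_eq_zero_of_H20 hh ha]
  exact zero_mem _

theorem preservesType_mulLeft (hh : h ∈ D.H11) :
    D.PreservesType (LinearMap.mulLeft ℂ (ι ℂ h)) := by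
  have hhw {w} (hw : w ∈ D.wedgeH11) : ι ℂ h * w ∈ D.wedgeH11 :=
    mul_mem (D.ι_mem_wedgeH11 hh) hw
  refine ⟨D.Lam20_le_iff.2 fun a ha w hw => ?_,
    D.Lam11_le_iff.2 ⟨fun w hw => D.mem_Lam11_of_mem_wedgeH11 (hhw hw), fun a ha b hb w hw => ?_⟩,
    D.Lam02_le_iff.2 fun b hb w hw => ?_⟩
  · rw [Submodule.mem_comap, LinearMap.mulLeft_apply, ι_mul_ι_mul_swap]
    exact neg_mem (D.ι_mul_mem_Lam20 ha (hhw hw))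
  · rw [Submodule.mem_comap, LinearMap.mulLeft_apply, ι_mul_ι_mul_swap h a,
      ι_mul_ι_mul_swap h b, mul_neg, neg_neg]
    exact D.ι_mul_ι_mul_mem_Lam11 ha hb (hhw hw)
  · rw [Submodule.mem_comap, LinearMap.mulLeft_apply, ι_mul_ι_mul_swap]
    exact neg_mem (D.ι_mul_mem_Lam02 hb (hhw hw))

theorem lowersType_mulLeft (hh : h ∈ D.H02) : D.LowersType (LinearMap.mulLeft ℂ (ι ℂ h)) := by
  refine ⟨D.Lam02_le_iff.2 fun b hb w _ => D.ι_mul_ι_mul_eq_zero_of_H02 hh hb w,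
    D.Lam11_le_iff.2 ⟨fun w hw => D.ι_mul_mem_Lam02 hh hw, fun a _ b hb w _ => ?_⟩,
    D.Lam20_le_iff.2 fun a ha w hw => ?_⟩
  · rw [Submodule.mem_comap, LinearMap.mulLeft_apply, ι_mul_ι_mul_swap,
      D.ι_mul_ι_mul_eq_zero_of_H02 hh hb, mul_zero, neg_zero]
    exact zero_mem _
  · rw [Submodule.mem_comap, LinearMap.mulLeft_apply, ι_mul_ι_mul_swap]
    exact neg_mem (D.ι_mul_ι_mul_mem_Lam11 ha hh hw)

variable {d : Module.Dual ℂ (ℂ ⊗[ℚ] V)}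

theorem raisesType_contractLeft (hd20 : ∀ y ∈ D.H20, d y = 0) (hd11 : ∀ y ∈ D.H11, d y = 0) :
    D.RaisesType (contractLeft d) := by
  have hw0 {w} (hw : w ∈ D.wedgeH11) : contractLeft d w = 0 :=
    CliffordAlgebra.contractLeft_eq_zero_of_mem_adjoin d hd11 hw
  refine ⟨D.Lam20_le_iff.2 fun a ha w hw => ?_,
    D.Lam11_le_iff.2 ⟨fun w hw => ?_, fun a ha b _ w hw => ?_⟩,
    D.Lam02_le_iff.2 fun b _ w hw => ?_⟩
  · rw [LinearMap.mem_ker, contractLeft_ι_mul, hd20 a ha, hw0 hw, zero_smul, mul_zero, sub_zero]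
  · rw [Submodule.mem_comap, hw0 hw]
    exact zero_mem _
  · rw [Submodule.mem_comap, contractLeft_ι_mul, contractLeft_ι_mul, hd20 a ha, hw0 hw, zero_smul,
      mul_zero, sub_zero, zero_sub, mul_smul_comm]
    exact neg_mem (Submodule.smul_mem _ _ (D.ι_mul_mem_Lam20 ha hw))
  · rw [Submodule.mem_comap, contractLeft_ι_mul, hw0 hw, mul_zero, sub_zero]
    exact Submodule.smul_mem _ _ (D.mem_Lam11_of_mem_wedgeH11 hw)

theorem preservesType_contractLeft (hd20 : ∀ y ∈ D.H20, d y = 0)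
    (hd02 : ∀ y ∈ D.H02, d y = 0) : D.PreservesType (contractLeft d) := by
  have hdw {w} (hw : w ∈ D.wedgeH11) : contractLeft d w ∈ D.wedgeH11 :=
    CliffordAlgebra.contractLeft_mem_adjoin d hw
  refine ⟨D.Lam20_le_iff.2 fun a ha w hw => ?_,
    D.Lam11_le_iff.2 ⟨fun w hw => D.mem_Lam11_of_mem_wedgeH11 (hdw hw), fun a ha b hb w hw => ?_⟩,
    D.Lam02_le_iff.2 fun b hb w hw => ?_⟩
  · rw [Submodule.mem_comap, contractLeft_ι_mul, hd20 a ha, zero_smul, zero_sub]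
    exact neg_mem (D.ι_mul_mem_Lam20 ha (hdw hw))
  · rw [Submodule.mem_comap, contractLeft_ι_mul, contractLeft_ι_mul, hd20 a ha, hd02 b hb,
      zero_smul, zero_smul, zero_sub, zero_sub, mul_neg, neg_neg]
    exact D.ι_mul_ι_mul_mem_Lam11 ha hb (hdw hw)
  · rw [Submodule.mem_comap, contractLeft_ι_mul, hd02 b hb, zero_smul, zero_sub]
    exact neg_mem (D.ι_mul_mem_Lam02 hb (hdw hw))

theorem lowersType_contractLeft (hd02 : ∀ y ∈ D.H02, d y = 0) (hd11 : ∀ y ∈ D.H11, d y = 0) :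
    D.LowersType (contractLeft d) := by
  have hw0 {w} (hw : w ∈ D.wedgeH11) : contractLeft d w = 0 :=
    CliffordAlgebra.contractLeft_eq_zero_of_mem_adjoin d hd11 hw
  refine ⟨D.Lam02_le_iff.2 fun b hb w hw => ?_,
    D.Lam11_le_iff.2 ⟨fun w hw => ?_, fun a _ b hb w hw => ?_⟩,
    D.Lam20_le_iff.2 fun a _ w hw => ?_⟩
  · rw [LinearMap.mem_ker, contractLeft_ι_mul, hd02 b hb, hw0 hw, zero_smul, mul_zero, sub_zero]
  · rw [Submodule.mem_comap, hw0 hw]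
    exact zero_mem _
  · rw [Submodule.mem_comap, contractLeft_ι_mul, contractLeft_ι_mul, hd02 b hb, hw0 hw, zero_smul,
      mul_zero, sub_zero, mul_zero, sub_zero]
    exact Submodule.smul_mem _ _ (D.ι_mul_mem_Lam02 hb hw)
  · rw [Submodule.mem_comap, contractLeft_ι_mul, hw0 hw, mul_zero, sub_zero]
    exact Submodule.smul_mem _ _ (D.mem_Lam11_of_mem_wedgeH11 hw)

def lamLinear (h : ℂ ⊗[ℚ] V) : Module.End ℂ (ExteriorAlgebra ℂ (ℂ ⊗[ℚ] V)) :=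
  LinearMap.mulLeft ℂ (ι ℂ h) - contractLeft (D.BC h)

theorem raisesType_lamLinear (hh : h ∈ D.H20) : D.RaisesType (D.lamLinear h) :=
  (D.raisesType_mulLeft hh).sub (D.raisesType_contractLeft
    (fun _ => D.BC_eq_zero_of_H20_of_H20 hh) (fun _ => D.BC_eq_zero_of_H20_of_H11 hh))

theorem preservesType_lamLinear (hh : h ∈ D.H11) : D.PreservesType (D.lamLinear h) :=
  (D.preservesType_mulLeft hh).sub (D.preservesType_contractLeft
    (fun y hy => D.BC_symm h y ▸ D.BC_eq_zero_of_H20_of_H11 hy hh)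
    (fun y hy => D.BC_symm h y ▸ D.BC_eq_zero_of_H02_of_H11 hy hh))

theorem lowersType_lamLinear (hh : h ∈ D.H02) : D.LowersType (D.lamLinear h) :=
  (D.lowersType_mulLeft hh).sub (D.lowersType_contractLeft
    (fun _ => D.BC_eq_zero_of_H02_of_H02 hh) (fun _ => D.BC_eq_zero_of_H02_of_H11 hh))

def hodgeGrading (e f : ℂ ⊗[ℚ] V) : Module.End ℂ (ExteriorAlgebra ℂ (ℂ ⊗[ℚ] V)) :=
  LinearMap.mulLeft ℂ (ι ℂ e) ∘ₗ contractLeft (D.BC f) -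
    LinearMap.mulLeft ℂ (ι ℂ f) ∘ₗ contractLeft (D.BC e)

theorem hodgeGrading_apply (e f : ℂ ⊗[ℚ] V) (x : ExteriorAlgebra ℂ (ℂ ⊗[ℚ] V)) :
    D.hodgeGrading e f x =
      ι ℂ e * contractLeft (D.BC f) x - ι ℂ f * contractLeft (D.BC e) x :=
  rfl

theorem contractLeft_BC_eq_zero_of_H20 (hh : h ∈ D.H20) (hw : w ∈ D.wedgeH11) :
    contractLeft (D.BC h) w = 0 :=
  CliffordAlgebra.contractLeft_eq_zero_of_mem_adjoin _ (fun _ => D.BC_eq_zero_of_H20_of_H11 hh) hw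

theorem contractLeft_BC_eq_zero_of_H02 (hh : h ∈ D.H02) (hw : w ∈ D.wedgeH11) :
    contractLeft (D.BC h) w = 0 :=
  CliffordAlgebra.contractLeft_eq_zero_of_mem_adjoin _ (fun _ => D.BC_eq_zero_of_H02_of_H11 hh) hw

theorem BC_smul_ι_of_H20_eq_span (he : D.H20 = ℂ ∙ e) (ha : a ∈ D.H20) :
    D.BC f a • ι ℂ e = D.BC e f • ι ℂ a := by
  rw [← map_smul, ← map_smul, LinearMap.apply_smul_eq_smul_of_mem_span_singleton _ (he ▸ ha),
    D.BC_symm]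

theorem BC_smul_ι_of_H02_eq_span (hf : D.H02 = ℂ ∙ f) (hb : b ∈ D.H02) :
    D.BC e b • ι ℂ f = D.BC e f • ι ℂ b := by
  rw [← map_smul, ← map_smul, LinearMap.apply_smul_eq_smul_of_mem_span_singleton _ (hf ▸ hb)]

section Grading

variable (he : D.H20 = ℂ ∙ e) (hf : D.H02 = ℂ ∙ f)
include he hf

theorem Lam20_le_eigenspace : D.Lam20 ≤ (D.hodgeGrading e f).eigenspace (D.BC e f) := by
  have he' : e ∈ D.H20 := he ▸ Submodule.mem_span_singleton_self e
  have hf' : f ∈ D.H02 := hf ▸ Submodule.mem_span_singleton_self f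
  refine D.Lam20_le_iff.2 fun a ha w hw => Module.End.mem_eigenspace_iff.2 ?_
  rw [hodgeGrading_apply, contractLeft_ι_mul, contractLeft_ι_mul,
    D.BC_eq_zero_of_H20_of_H20 he' ha, D.contractLeft_BC_eq_zero_of_H20 he' hw,
    D.contractLeft_BC_eq_zero_of_H02 hf' hw, zero_smul, mul_zero, sub_zero, sub_zero, mul_zero,
    sub_zero, mul_smul_comm, ← smul_mul_assoc, D.BC_smul_ι_of_H20_eq_span he ha, smul_mul_assoc]

theorem Lam02_le_eigenspace : D.Lam02 ≤ (D.hodgeGrading e f).eigenspace (-D.BC e f) := by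
  have he' : e ∈ D.H20 := he ▸ Submodule.mem_span_singleton_self e
  have hf' : f ∈ D.H02 := hf ▸ Submodule.mem_span_singleton_self f
  refine D.Lam02_le_iff.2 fun b hb w hw => Module.End.mem_eigenspace_iff.2 ?_
  rw [hodgeGrading_apply, contractLeft_ι_mul, contractLeft_ι_mul,
    D.BC_eq_zero_of_H02_of_H02 hf' hb, D.contractLeft_BC_eq_zero_of_H20 he' hw,
    D.contractLeft_BC_eq_zero_of_H02 hf' hw, zero_smul, mul_zero, sub_zero, sub_zero, mul_zero,
    zero_sub, mul_smul_comm, ← smul_mul_assoc, D.BC_smul_ι_of_H02_eq_span hf hb, smul_mul_assoc,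
    neg_smul]

theorem Lam11_le_eigenspace : D.Lam11 ≤ (D.hodgeGrading e f).eigenspace 0 := by
  have he' : e ∈ D.H20 := he ▸ Submodule.mem_span_singleton_self e
  have hf' : f ∈ D.H02 := hf ▸ Submodule.mem_span_singleton_self f
  refine D.Lam11_le_iff.2 ⟨fun w hw => Module.End.mem_eigenspace_iff.2 ?_,
    fun a ha b hb w hw => Module.End.mem_eigenspace_iff.2 ?_⟩
  · rw [hodgeGrading_apply, D.contractLeft_BC_eq_zero_of_H20 he' hw,
      D.contractLeft_BC_eq_zero_of_H02 hf' hw, mul_zero, mul_zero, sub_zero, zero_smul]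
  rw [hodgeGrading_apply, contractLeft_ι_mul, contractLeft_ι_mul, contractLeft_ι_mul,
    contractLeft_ι_mul, D.BC_eq_zero_of_H20_of_H20 he' ha, D.BC_eq_zero_of_H02_of_H02 hf' hb,
    D.contractLeft_BC_eq_zero_of_H20 he' hw, D.contractLeft_BC_eq_zero_of_H02 hf' hw]
  have hfa_mul : ι ℂ e * (D.BC f a • (ι ℂ b * w)) = D.BC e f • (ι ℂ a * (ι ℂ b * w)) := by
    rw [mul_smul_comm, ← smul_mul_assoc, D.BC_smul_ι_of_H20_eq_span he ha, smul_mul_assoc]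
  have heb_mul : ι ℂ f * (ι ℂ a * (D.BC e b • w)) = -(D.BC e f • (ι ℂ a * (ι ℂ b * w))) := by
    rw [ι_mul_ι_mul_swap, mul_smul_comm, ← smul_mul_assoc, D.BC_smul_ι_of_H02_eq_span hf hb,
      smul_mul_assoc, mul_smul_comm]
  simp only [mul_zero, sub_zero, zero_smul, zero_sub, mul_neg, sub_neg_eq_add]
  rw [hfa_mul, heb_mul, add_neg_cancel]

end Grading

theorem Lam_disjoint : D.Lam20 ⊓ (D.Lam11 ⊔ D.Lam02) = ⊥ ∧ D.Lam11 ⊓ D.Lam02 = ⊥ := by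
  obtain ⟨e, he0, he⟩ := D.exists_H20_eq_span_singleton
  have hf := D.H02_eq_span_sigmaM he
  have hc : D.BC e (sigmaM V e) ≠ 0 := fun h0 => by
    simpa [h0] using (D.pos_20 e (he ▸ Submodule.mem_span_singleton_self e) he0).1
  have hind := (D.hodgeGrading e (sigmaM V e)).eigenspaces_iSupIndep
  have h20 := D.Lam20_le_eigenspace he hf
  have h11 := D.Lam11_le_eigenspace he hf
  have h02 := D.Lam02_le_eigenspace he hf
  constructor
  · have hdisj := hind.disjoint_biSup (x := D.BC e (sigmaM V e))
      (y := {0, -D.BC e (sigmaM V e)}) (by simp [hc, self_eq_neg])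
    rw [iSup_pair] at hdisj
    exact disjoint_iff.1 (hdisj.mono h20 (sup_le_sup h11 h02))
  · exact disjoint_iff.1 ((hind.pairwiseDisjoint (by simpa using hc)).mono h11 h02)

theorem Lam_sup_eq_top : D.Lam20 ⊔ D.Lam11 ⊔ D.Lam02 = ⊤ := by
  set S := D.Lam20 ⊔ D.Lam11 ⊔ D.Lam02
  have hmul (v : ℂ ⊗[ℚ] V) : S ≤ S.comap (LinearMap.mulLeft ℂ (ι ℂ v)) := by
    obtain ⟨y, hy, c, hc, rfl⟩ := Submodule.mem_sup.1 (D.sup_top ▸ Submodule.mem_top (x := v))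
    obtain ⟨a, ha, b, hb, rfl⟩ := Submodule.mem_sup.1 hy
    intro x hx
    rw [Submodule.mem_comap, LinearMap.mulLeft_apply, map_add, map_add, add_mul, add_mul]
    exact add_mem (add_mem ((D.raisesType_mulLeft ha).le_comap_sup hx)
      ((D.preservesType_mulLeft hb).le_comap_sup hx)) ((D.lowersType_mulLeft hc).le_comap_sup hx)
  have hone : (1 : ExteriorAlgebra ℂ (ℂ ⊗[ℚ] V)) ∈ S :=
    (le_sup_right.trans le_sup_left : D.Lam11 ≤ S) (D.mem_Lam11_of_mem_wedgeH11 (one_mem _))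
  have hadj := Algebra.adjoin_toSubmodule_le_of_mul_mem hone (s := Set.range (ι ℂ))
    (by rintro _ ⟨v, rfl⟩ x hx; exact hmul v hx)
  rwa [CliffordAlgebra.adjoin_range_ι, Algebra.top_toSubmodule, top_le_iff] at hadj

end K3HodgeData

end

theorem clifford_hodge_structure (D : K3HodgeData H) :
    (D.Lam20 ⊔ D.Lam11 ⊔ D.Lam02 = ⊤ ∧
      D.Lam20 ⊓ (D.Lam11 ⊔ D.Lam02) = ⊥ ∧ D.Lam11 ⊓ D.Lam02 = ⊥) ∧
    (∀ h ∈ D.H20,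
      (∀ x ∈ D.Lam20, D.lam h x = 0) ∧
      (∀ x ∈ D.Lam11, D.lam h x ∈ D.Lam20) ∧
      (∀ x ∈ D.Lam02, D.lam h x ∈ D.Lam11)) ∧
    (∀ h ∈ D.H11,
      (∀ x ∈ D.Lam20, D.lam h x ∈ D.Lam20) ∧
      (∀ x ∈ D.Lam11, D.lam h x ∈ D.Lam11) ∧
      (∀ x ∈ D.Lam02, D.lam h x ∈ D.Lam02)) ∧
    (∀ h ∈ D.H02,
      (∀ x ∈ D.Lam02, D.lam h x = 0) ∧
      (∀ x ∈ D.Lam11, D.lam h x ∈ D.Lam02) ∧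
      (∀ x ∈ D.Lam20, D.lam h x ∈ D.Lam11)) :=
  ⟨⟨D.Lam_sup_eq_top, D.Lam_disjoint⟩, fun _ => D.raisesType_lamLinear,
    fun _ => D.preservesType_lamLinear, fun _ => D.lowersType_lamLinear⟩
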